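/- Let B be an n×n symmetric positive definite real matrix, let v, r ∈ ℝⁿ, let δ > 0, and set the corrected gradient variation r̃ := r − δv. If the inner product r̃ᵀv = (r − δv)ᵀv > 0 is positive, then the matrix B⁺ := B + (r̃ r̃ᵀ)/(vᵀ r̃) − (B v vᵀ B)/(vᵀ B v) + δ I satisfies B⁺ ⪰ δ I (i.e., all eigenvalues of B⁺ are at least δ) and satisfies the secant condition B⁺ v = r. -/

import Mathlib

/-!
`B⁺ - δ I` is the BFGS update of `B` with the corrected variation `r̃`. Cauchy–Schwarz for the
semi-inner product `xᵀ B y` makes `B - B v vᵀ B / (vᵀ B v)` positive semidefinite, and adding the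
positive semidefinite rank-one term `r̃ r̃ᵀ / (vᵀ r̃)` keeps it so. On `v` the two rank-one terms
produce `r̃` and `B v`, so `B⁺ v = B v + r̃ - B v + δ v = r`.
-/

open Matrix

variable {ι α : Type*} [Fintype ι]

theorem Matrix.IsSymm.vecMul_eq_mulVec [CommSemiring α] {B : Matrix ι ι α} (hB : B.IsSymm)
    (v : ι → α) : v ᵥ* B = B *ᵥ v := by
  rw [← mulVec_transpose, hB.eq]

theorem Matrix.IsSymm.dotProduct_mulVec_comm [CommSemiring α] {B : Matrix ι ι α} (hB : B.IsSymm)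
    (x y : ι → α) : x ⬝ᵥ B *ᵥ y = y ⬝ᵥ B *ᵥ x := by
  rw [dotProduct_mulVec, hB.vecMul_eq_mulVec, dotProduct_comm]

theorem Matrix.PosSemidef.dotProduct_mulVec_sq_le {B : Matrix ι ι ℝ} (hB : B.PosSemidef)
    (x v : ι → ℝ) : (x ⬝ᵥ B *ᵥ v) ^ 2 ≤ (x ⬝ᵥ B *ᵥ x) * (v ⬝ᵥ B *ᵥ v) := by
  have hquad : ∀ t : ℝ,
      0 ≤ (v ⬝ᵥ B *ᵥ v) * (t * t) + (-2 * (x ⬝ᵥ B *ᵥ v)) * t + x ⬝ᵥ B *ᵥ x := fun t => by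
    have h := hB.dotProduct_mulVec_nonneg (x - t • v)
    simp only [star_trivial, mulVec_sub, mulVec_smul, sub_dotProduct, dotProduct_sub,
      smul_dotProduct, dotProduct_smul, smul_eq_mul,
      (isHermitian_iff_isSymm.mp hB.isHermitian).dotProduct_mulVec_comm v x] at h
    linarith
  have hdiscrim := discrim_le_zero hquad
  rw [discrim] at hdiscrim
  linarith

theorem Matrix.PosSemidef.sub_inv_smul_vecMulVec_mulVec {B : Matrix ι ι ℝ} (hB : B.PosSemidef)
    (v : ι → ℝ) : (B - (v ⬝ᵥ B *ᵥ v)⁻¹ • vecMulVec (B *ᵥ v) (B *ᵥ v)).PosSemidef := by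
  have hc : 0 ≤ v ⬝ᵥ B *ᵥ v := by simpa using hB.dotProduct_mulVec_nonneg v
  have hw : ((v ⬝ᵥ B *ᵥ v)⁻¹ • vecMulVec (B *ᵥ v) (B *ᵥ v)).PosSemidef := by
    simpa using (posSemidef_vecMulVec_self_star (B *ᵥ v)).smul (inv_nonneg.mpr hc)
  refine posSemidef_iff_dotProduct_mulVec.mpr ⟨hB.isHermitian.sub hw.isHermitian, fun x => ?_⟩
  rw [star_trivial, sub_mulVec, smul_mulVec, vecMulVec_mulVec, op_smul_eq_smul, dotProduct_sub,
    dotProduct_smul, dotProduct_smul, smul_eq_mul, smul_eq_mul, sub_nonneg,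
    dotProduct_comm (B *ᵥ v) x, ← sq]
  rcases hc.eq_or_lt with hc0 | hcpos
  · simpa [← hc0] using hB.dotProduct_mulVec_nonneg x
  · rw [inv_mul_le_iff₀ hcpos, mul_comm]
    exact hB.dotProduct_mulVec_sq_le x v

def bfgsUpdate [Field α] (B : Matrix ι ι α) (v y : ι → α) : Matrix ι ι α :=
  B + (v ⬝ᵥ y)⁻¹ • vecMulVec y y - (v ⬝ᵥ B *ᵥ v)⁻¹ • vecMulVec (B *ᵥ v) (v ᵥ* B)

theorem bfgsUpdate_mulVec_self [Field α] (B : Matrix ι ι α) {v y : ι → α}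
    (hy : v ⬝ᵥ y ≠ 0) (hB : v ⬝ᵥ B *ᵥ v ≠ 0) : bfgsUpdate B v y *ᵥ v = y := by
  rw [bfgsUpdate, sub_mulVec, add_mulVec, smul_mulVec, smul_mulVec, vecMulVec_mulVec,
    vecMulVec_mulVec, op_smul_eq_smul, op_smul_eq_smul, ← dotProduct_mulVec, dotProduct_comm y,
    inv_smul_smul₀ hy, inv_smul_smul₀ hB, add_sub_cancel_left]

theorem Matrix.PosSemidef.bfgsUpdate {B : Matrix ι ι ℝ} (hB : B.PosSemidef) {v y : ι → ℝ}
    (hy : 0 ≤ v ⬝ᵥ y) : (bfgsUpdate B v y).PosSemidef := by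
  have hyy : ((v ⬝ᵥ y)⁻¹ • vecMulVec y y).PosSemidef := by
    simpa using (posSemidef_vecMulVec_self_star y).smul (inv_nonneg.mpr hy)
  rw [_root_.bfgsUpdate, (isHermitian_iff_isSymm.mp hB.isHermitian).vecMul_eq_mulVec,
    add_sub_right_comm]
  exact (hB.sub_inv_smul_vecMulVec_mulVec v).add hyy

theorem stmt_0_general {n : ℕ} (B : Matrix (Fin n) (Fin n) ℝ) (hB : B.PosDef)
    (v r : Fin n → ℝ) (δ : ℝ)
    (rt : Fin n → ℝ) (hrt : rt = r - δ • v)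
    (hpos : rt ⬝ᵥ v > 0)
    (Bplus : Matrix (Fin n) (Fin n) ℝ)
    (hBplus : Bplus = B + (v ⬝ᵥ rt)⁻¹ • vecMulVec rt rt
        - (v ⬝ᵥ B.mulVec v)⁻¹ • vecMulVec (B.mulVec v) (v ᵥ* B) + δ • (1 : Matrix (Fin n) (Fin n) ℝ)) :
    (Bplus - δ • (1 : Matrix (Fin n) (Fin n) ℝ)).PosSemidef ∧ Bplus.mulVec v = r := by
  replace hBplus : Bplus = bfgsUpdate B v rt + δ • 1 := hBplus
  have hvrt : 0 < v ⬝ᵥ rt := by rwa [dotProduct_comm]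
  have hvBv : 0 < v ⬝ᵥ B *ᵥ v := by
    have hv : v ≠ 0 := by
      rintro rfl
      simp at hpos
    simpa using hB.dotProduct_mulVec_pos hv
  constructor
  · rw [hBplus, add_sub_cancel_right]
    exact hB.posSemidef.bfgsUpdate hvrt.le
  · rw [hBplus, add_mulVec, bfgsUpdate_mulVec_self B hvrt.ne' hvBv.ne', smul_mulVec, one_mulVec,
      hrt, sub_add_cancel]

/-- Proposition 1 of the paper (regularized BFGS update): if `B ≻ 0` is symmetric,
`δ > 0`, and the corrected gradient variation `r̃ = r - δ v` satisfies `r̃ᵀ v > 0`,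
then `B⁺ = B + r̃ r̃ᵀ/(vᵀ r̃) - B v vᵀ B/(vᵀ B v) + δ I` satisfies `B⁺ ⪰ δ I` and the
secant condition `B⁺ v = r`. -/
theorem stmt_0 {n : ℕ} (B : Matrix (Fin n) (Fin n) ℝ) (hB : B.PosDef)
    (v r : Fin n → ℝ) (δ : ℝ) (hδ : 0 < δ)
    (rt : Fin n → ℝ) (hrt : rt = r - δ • v)
    (hpos : rt ⬝ᵥ v > 0)
    (Bplus : Matrix (Fin n) (Fin n) ℝ)
    (hBplus : Bplus = B + (v ⬝ᵥ rt)⁻¹ • vecMulVec rt rt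
        - (v ⬝ᵥ B.mulVec v)⁻¹ • vecMulVec (B.mulVec v) (v ᵥ* B) + δ • (1 : Matrix (Fin n) (Fin n) ℝ)) :
    (Bplus - δ • (1 : Matrix (Fin n) (Fin n) ℝ)).PosSemidef ∧ Bplus.mulVec v = r :=
  stmt_0_general B hB v r δ rt hrt hpos Bplus hBplus
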